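/- Let $G\in C^1(\mathbb{R}^{n+1}\setminus\{0\})$ be odd and positively homogeneous of degree $-n$, and let $F := \partial_j G$ for some $j\in\{1,\dots,n+1\}$. Then for every $a\in\mathbb{R}^n$ and every $t>0$: $\int_{\mathbb{R}^n} F(y, a\cdot y + t)\, dy = 0$. -/

import Mathlib

/-!
Substituting `s ↦ s + ⟪a, y⟫` turns `G` into a function of the same kind and the graph into the
slice `s = t`, so it suffices to show `∫ ∂_w H (y, t) dy = 0` for every direction `w`. Homogeneity
makes `∂_w H` of degree `-n - 1`, hence integrable on each slice, with slice integral scaling like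
`1 / t`. For a horizontal `w` the slice integral does not depend on `t` (integrate by parts in `y`
against the difference of two slices, which is integrable), so it vanishes. For `w = (0, 1)` it is
the derivative of `s ↦ ∫ (H (y, s) - H (y, 1)) dy`, which vanishes identically on `s > 0` by
scaling and oddness.
-/

open MeasureTheory Filter Metric Module
open scoped RealInnerProductSpace Topology

theorem Prod.mk_ne_zero_of_snd_ne_zero {α β : Type*} [Zero α] [Zero β] (a : α) {b : β}
    (hb : b ≠ 0) : (a, b) ≠ 0 :=
  fun h => hb (congrArg Prod.snd h)

section Homogeneous

variable {E F : Type*} [NormedAddCommGroup E] [NormedSpace ℝ E]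
  [NormedAddCommGroup F] [NormedSpace ℝ F]

def IsPosHomogeneous (d : ℝ) (f : E → F) : Prop :=
  ∀ l : ℝ, 0 < l → ∀ x : E, x ≠ 0 → f (l • x) = l ^ d • f x

variable {d : ℝ} {f : E → F}

theorem IsPosHomogeneous.fderiv (hf : IsPosHomogeneous d f)
    (hdf : DifferentiableOn ℝ f {0}ᶜ) : IsPosHomogeneous (d - 1) (fderiv ℝ f) := by
  intro l hl x hx
  have hscale : (f <| l • ·) =ᶠ[𝓝 x] (l ^ d • f ·) := by
    filter_upwards [isOpen_compl_singleton.mem_nhds hx] with z hz using hf l hl z hz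
  have key : l • _root_.fderiv ℝ f (l • x) = l ^ d • _root_.fderiv ℝ f x := by
    rw [← fderiv_comp_smul, hscale.fderiv_eq,
      fderiv_fun_const_smul (hdf.differentiableAt (isOpen_compl_singleton.mem_nhds hx))]
  rw [Real.rpow_sub_one hl.ne', div_eq_inv_mul, mul_smul, ← key, smul_smul,
    inv_mul_cancel₀ hl.ne', one_smul]

theorem IsPosHomogeneous.exists_norm_le [FiniteDimensional ℝ E] (hf : IsPosHomogeneous d f)
    (hc : ContinuousOn f {0}ᶜ) : ∃ C, 0 ≤ C ∧ ∀ x ≠ 0, ‖f x‖ ≤ C * ‖x‖ ^ d := by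
  obtain ⟨C, hC⟩ := (isCompact_sphere (0 : E) 1).exists_bound_of_continuousOn
    (hc.mono fun x hx => ne_zero_of_mem_unit_sphere ⟨x, hx⟩)
  refine ⟨max C 0, le_max_right _ _, fun x hx => ?_⟩
  have hnx : 0 < ‖x‖ := norm_pos_iff.2 hx
  have hu : ‖x‖⁻¹ • x ∈ sphere (0 : E) 1 := by
    simp [norm_smul, hnx.ne']
  calc ‖f x‖ = ‖x‖ ^ d * ‖f (‖x‖⁻¹ • x)‖ := by
        rw [← Real.norm_of_nonneg (Real.rpow_nonneg hnx.le d), ← norm_smul,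
          ← hf _ hnx _ (ne_zero_of_mem_unit_sphere ⟨_, hu⟩), smul_inv_smul₀ hnx.ne']
    _ ≤ max C 0 * ‖x‖ ^ d := by
        rw [mul_comm]
        exact mul_le_mul_of_nonneg_right ((hC _ hu).trans (le_max_left _ _)) (by positivity)

theorem IsPosHomogeneous.comp_continuousLinearEquiv {E' : Type*} [NormedAddCommGroup E']
    [NormedSpace ℝ E'] (hf : IsPosHomogeneous d f) (A : E' ≃L[ℝ] E) :
    IsPosHomogeneous d (f ∘ A) :=
  fun l hl x hx => by
    rw [Function.comp_apply, Function.comp_apply, map_smul]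
    exact hf l hl _ (A.map_ne_zero_iff.2 hx)

theorem IsPosHomogeneous.apply_mk_mul {d : ℝ} {f : E × ℝ → F} (hf : IsPosHomogeneous d f)
    {l : ℝ} (hl : 0 < l) (y : E) {s : ℝ} (hs : s ≠ 0) :
    f (y, l * s) = l ^ d • f (l⁻¹ • y, s) := by
  rw [← hf l hl _ (Prod.mk_ne_zero_of_snd_ne_zero _ hs), Prod.smul_mk, smul_inv_smul₀ hl.ne',
    smul_eq_mul]

theorem DifferentiableAt.hasDerivAt_comp_mk {f : E × ℝ → F} {y : E} {s : ℝ}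
    (hf : DifferentiableAt ℝ f (y, s)) :
    HasDerivAt (fun σ => f (y, σ)) (fderiv ℝ f (y, s) (0, 1)) s :=
  hf.hasFDerivAt.comp_hasDerivAt s ((hasDerivAt_const s y).prodMk (hasDerivAt_id s))

theorem norm_fderiv_apply_vertical_le {f : E × ℝ → F} {C d ρ : ℝ} (hC0 : 0 ≤ C) (hd : d ≤ 0)
    (hC : ∀ x ≠ 0, ‖fderiv ℝ f x‖ ≤ C * ‖x‖ ^ d) (hρ : 0 < ρ) {x : E × ℝ} (hx : ρ ≤ ‖x‖) :
    ‖fderiv ℝ f x (0, 1)‖ ≤ C * ρ ^ d :=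
  calc ‖fderiv ℝ f x (0, 1)‖ ≤ ‖fderiv ℝ f x‖ * ‖((0 : E), (1 : ℝ))‖ := (fderiv ℝ f x).le_opNorm _
    _ ≤ C * ‖x‖ ^ d := by simpa [Prod.norm_def] using hC x (norm_pos_iff.1 (hρ.trans_le hx))
    _ ≤ C * ρ ^ d := by gcongr C * ?_; exact Real.rpow_le_rpow_of_nonpos hρ hx hd

theorem norm_sub_slice_le {f : E × ℝ → F} {C d : ℝ} (hC0 : 0 ≤ C) (hd : d ≤ 0)
    (hf : DifferentiableOn ℝ f {0}ᶜ) (hC : ∀ x ≠ 0, ‖fderiv ℝ f x‖ ≤ C * ‖x‖ ^ d)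
    {y : E} (hy : y ≠ 0) (s₁ s₂ : ℝ) :
    ‖f (y, s₂) - f (y, s₁)‖ ≤ C * ‖y‖ ^ d * |s₂ - s₁| := by
  have hderiv : ∀ σ : ℝ, HasDerivAt (fun σ => f (y, σ)) (fderiv ℝ f (y, σ) (0, 1)) σ := fun σ =>
    (hf.differentiableAt (isOpen_compl_singleton.mem_nhds
      fun h => hy (congrArg Prod.fst h))).hasDerivAt_comp_mk
  have hbound : ∀ σ : ℝ, ‖fderiv ℝ f (y, σ) (0, 1)‖ ≤ C * ‖y‖ ^ d := fun σ =>
    norm_fderiv_apply_vertical_le hC0 hd hC (norm_pos_iff.2 hy) (le_max_left _ _)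
  simpa [Real.norm_eq_abs] using convex_univ.norm_image_sub_le_of_norm_hasDerivWithin_le
    (fun σ _ => (hderiv σ).hasDerivWithinAt) (fun σ _ => hbound σ) (Set.mem_univ s₁)
    (Set.mem_univ s₂)

end Homogeneous

section Slices

variable {E F : Type*} [NormedAddCommGroup E] [NormedSpace ℝ E] [FiniteDimensional ℝ E]
  [MeasurableSpace E] [BorelSpace E] {μ : Measure E} [μ.IsAddHaarMeasure]
  [NormedAddCommGroup F] [NormedSpace ℝ F]

theorem integrable_norm_mk_rpow_neg {r : ℝ} (hr : finrank ℝ E < r) {s : ℝ} (hs : s ≠ 0) :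
    Integrable (fun y : E => ‖(y, s)‖ ^ (-r)) μ := by
  set c := min |s| 1 / 2 with hc_def
  have hc : 0 < c := by positivity
  have hr0 : -r ≤ 0 := by linarith [(Nat.cast_nonneg _ : (0 : ℝ) ≤ finrank ℝ E)]
  have hlower : ∀ y : E, c * (1 + ‖y‖) ≤ ‖(y, s)‖ := by
    intro y
    have hs1 := min_le_left |s| 1
    have hs2 := min_le_right |s| 1
    rw [Prod.norm_def, Real.norm_eq_abs]
    rcases le_total ‖y‖ 1 with h | h
    · exact le_max_of_le_right (by nlinarith)
    · exact le_max_of_le_left (by nlinarith)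
  refine ((integrable_one_add_norm hr).const_mul (c ^ (-r))).mono'
    (Measurable.aestronglyMeasurable (by fun_prop)) (ae_of_all _ fun y => ?_)
  rw [Real.norm_of_nonneg (by positivity), ← Real.mul_rpow hc.le (by positivity)]
  exact Real.rpow_le_rpow_of_nonpos (by positivity) (hlower y) hr0

theorem IsPosHomogeneous.integrable_slice {d : ℝ} {f : E × ℝ → F} (hf : IsPosHomogeneous d f)
    (hc : ContinuousOn f {0}ᶜ) (hd : d < -finrank ℝ E) {s : ℝ} (hs : s ≠ 0) :
    Integrable (fun y => f (y, s)) μ := by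
  obtain ⟨C, -, hC⟩ := hf.exists_norm_le hc
  have hcont : Continuous fun y : E => f (y, s) :=
    hc.comp_continuous (by fun_prop) fun y => Prod.mk_ne_zero_of_snd_ne_zero y hs
  refine ((integrable_norm_mk_rpow_neg (r := -d) (by linarith) hs).const_mul C).mono'
    hcont.aestronglyMeasurable (ae_of_all _ fun y => ?_)
  simpa only [neg_neg] using hC _ (Prod.mk_ne_zero_of_snd_ne_zero y hs)

variable {H : E × ℝ → F}

theorem integrable_fderiv_slice (hH : ContDiffOn ℝ 1 H {0}ᶜ)
    (hhom : IsPosHomogeneous (-finrank ℝ E) H) {s : ℝ} (hs : s ≠ 0) (w : E × ℝ) :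
    Integrable (fun y => fderiv ℝ H (y, s) w) μ := by
  refine Integrable.apply_continuousLinearMap ?_ w
  exact (hhom.fderiv (hH.differentiableOn one_ne_zero)).integrable_slice
    (hH.continuousOn_fderiv_of_isOpen isOpen_compl_singleton le_rfl) (by linarith) hs

theorem integrable_sub_slice (hH : ContDiffOn ℝ 1 H {0}ᶜ)
    (hhom : IsPosHomogeneous (-finrank ℝ E) H) {s₁ s₂ : ℝ} (hs₁ : s₁ ≠ 0) (hs₂ : s₂ ≠ 0) :
    Integrable (fun y => H (y, s₂) - H (y, s₁)) μ := by
  obtain ⟨C, hC0, hC⟩ := (hhom.fderiv (hH.differentiableOn one_ne_zero)).exists_norm_le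
    (hH.continuousOn_fderiv_of_isOpen isOpen_compl_singleton le_rfl)
  have hcont : Continuous fun y : E => H (y, s₂) - H (y, s₁) := by
    have hc := hH.continuousOn
    exact (hc.comp_continuous (by fun_prop) fun y => Prod.mk_ne_zero_of_snd_ne_zero y hs₂).sub
      (hc.comp_continuous (by fun_prop) fun y => Prod.mk_ne_zero_of_snd_ne_zero y hs₁)
  rw [← integrableOn_univ, ← Set.union_compl_self (closedBall (0 : E) 1)]
  refine (hcont.continuousOn.integrableOn_compact (isCompact_closedBall _ _)).union ?_
  -- outside the unit ball, `‖(y, 1)‖ = ‖y‖` dominates the vertical mean value bound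
  refine Integrable.mono' ((integrable_norm_mk_rpow_neg (r := finrank ℝ E + 1) (by linarith)
      one_ne_zero).const_mul (C * |s₂ - s₁|)).integrableOn hcont.aestronglyMeasurable.restrict ?_
  filter_upwards [ae_restrict_mem measurableSet_closedBall.compl] with y hy
  have hy1 : 1 < ‖y‖ := by simpa using hy
  have hnorm : ‖(y, (1 : ℝ))‖ = ‖y‖ := by simp [Prod.norm_def, hy1.le]
  rw [hnorm, mul_right_comm, neg_add, ← sub_eq_add_neg]
  exact norm_sub_slice_le hC0 (by linarith [(Nat.cast_nonneg _ : (0 : ℝ) ≤ finrank ℝ E)])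
    (hH.differentiableOn one_ne_zero) hC (norm_pos_iff.1 (one_pos.trans hy1)) s₁ s₂

theorem integral_sub_slice_mul (hhom : IsPosHomogeneous (-finrank ℝ E) H) {l : ℝ} (hl : 0 < l)
    {s₁ s₂ : ℝ} (hs₁ : s₁ ≠ 0) (hs₂ : s₂ ≠ 0) :
    ∫ y, (H (y, l * s₂) - H (y, l * s₁)) ∂μ = ∫ y, (H (y, s₂) - H (y, s₁)) ∂μ := by
  simp_rw [hhom.apply_mk_mul hl _ hs₂, hhom.apply_mk_mul hl _ hs₁, ← smul_sub]
  rw [integral_smul,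
    Measure.integral_comp_inv_smul_of_nonneg μ (fun y => H (y, s₂) - H (y, s₁)) hl.le,
    smul_smul, ← Real.rpow_natCast, ← Real.rpow_add hl, neg_add_cancel, Real.rpow_zero, one_smul]

theorem integral_fderiv_slice_mul (hH : ContDiffOn ℝ 1 H {0}ᶜ)
    (hhom : IsPosHomogeneous (-finrank ℝ E) H) {l : ℝ} (hl : 0 < l) {s : ℝ} (hs : s ≠ 0)
    (w : E × ℝ) :
    ∫ y, fderiv ℝ H (y, l * s) w ∂μ = l⁻¹ • ∫ y, fderiv ℝ H (y, s) w ∂μ := by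
  simp_rw [(hhom.fderiv (hH.differentiableOn one_ne_zero)).apply_mk_mul hl _ hs, smul_apply]
  rw [integral_smul,
    Measure.integral_comp_inv_smul_of_nonneg μ (fun y => fderiv ℝ H (y, s) w) hl.le,
    smul_smul, ← Real.rpow_natCast, ← Real.rpow_add hl,
    show -(finrank ℝ E : ℝ) - 1 + finrank ℝ E = -1 by ring, Real.rpow_neg_one]

theorem integral_sub_slice_neg (hodd : ∀ x, H (-x) = -H x) (s₁ s₂ : ℝ) :
    ∫ y, (H (y, -s₂) - H (y, -s₁)) ∂μ = ∫ y, (H (y, s₁) - H (y, s₂)) ∂μ := by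
  rw [← integral_neg_eq_self (fun y => H (y, s₁) - H (y, s₂)) μ]
  congr with y
  have hneg : ∀ s, H (y, -s) = -H (-y, s) := fun s => by rw [← hodd, Prod.neg_mk, neg_neg]
  rw [hneg, hneg]
  abel

theorem integral_sub_slice_one_eq_zero (hH : ContDiffOn ℝ 1 H {0}ᶜ) (hodd : ∀ x, H (-x) = -H x)
    (hhom : IsPosHomogeneous (-finrank ℝ E) H) {l : ℝ} (hl : 0 < l) :
    ∫ y, (H (y, l) - H (y, 1)) ∂μ = 0 := by
  have hint : ∀ {a b : ℝ}, a ≠ 0 → b ≠ 0 → Integrable (fun y => H (y, b) - H (y, a)) μ :=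
    fun ha hb => integrable_sub_slice hH hhom ha hb
  have hl₀ : l ≠ 0 := hl.ne'
  have hm₀ : (-1 : ℝ) ≠ 0 := by norm_num
  -- the layer between `-l` and `l` is the rescaled layer between `-1` and `1`; by oddness its
  -- lower part, between `-l` and `-1`, is a copy of its upper part
  have hscale : ∫ y, (H (y, l) - H (y, -l)) ∂μ = ∫ y, (H (y, 1) - H (y, -1)) ∂μ := by
    simpa using integral_sub_slice_mul (μ := μ) hhom hl hm₀ one_ne_zero
  have hsplit : ∫ y, (H (y, l) - H (y, -l)) ∂μ = ∫ y, (H (y, -1) - H (y, -l)) ∂μ +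
      ∫ y, (H (y, 1) - H (y, -1)) ∂μ + ∫ y, (H (y, l) - H (y, 1)) ∂μ := by
    rw [← integral_add (hint (neg_ne_zero.2 hl₀) hm₀) (hint hm₀ one_ne_zero),
      ← integral_add ?_ (hint one_ne_zero hl₀)]
    · congr with y
      abel
    · exact (hint (neg_ne_zero.2 hl₀) hm₀).add (hint hm₀ one_ne_zero)
  rw [hscale, integral_sub_slice_neg hodd l 1] at hsplit
  have htwo : (2 : ℝ) • ∫ y, (H (y, l) - H (y, 1)) ∂μ = 0 := by
    linear_combination (norm := module) -hsplit
  exact (smul_eq_zero.1 htwo).resolve_left two_ne_zero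

theorem integral_fderiv_slice_vertical_eq_zero (hH : ContDiffOn ℝ 1 H {0}ᶜ)
    (hodd : ∀ x, H (-x) = -H x) (hhom : IsPosHomogeneous (-finrank ℝ E) H) {t : ℝ} (ht : 0 < t) :
    ∫ y, fderiv ℝ H (y, t) (0, 1) ∂μ = 0 := by
  obtain ⟨C, hC0, hC⟩ := (hhom.fderiv (hH.differentiableOn one_ne_zero)).exists_norm_le
    (hH.continuousOn_fderiv_of_isOpen isOpen_compl_singleton le_rfl)
  have ht2 : 0 < t / 2 := half_pos ht
  have hball : ∀ s ∈ ball t (t / 2), t / 2 < s := fun s hs => by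
    rw [mem_ball, Real.dist_eq, abs_lt] at hs
    linarith
  have hbound : ∀ y : E, ∀ s ∈ ball t (t / 2),
      ‖fderiv ℝ H (y, s) (0, 1)‖ ≤ C * ‖(y, t / 2)‖ ^ (-(finrank ℝ E : ℝ) - 1) := fun y s hs =>
    norm_fderiv_apply_vertical_le hC0 (by linarith [(Nat.cast_nonneg _ : (0 : ℝ) ≤ finrank ℝ E)])
      hC (norm_pos_iff.2 (Prod.mk_ne_zero_of_snd_ne_zero y ht2.ne'))
      (max_le_max le_rfl (by simpa [abs_of_pos ht] using (hball s hs).le.trans (le_abs_self s)))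
  -- `s ↦ ∫ (H (y, s) - H (y, 1))` vanishes for `s > 0`; differentiate it under the integral
  have hderiv := hasDerivAt_integral_of_dominated_loc_of_deriv_le (μ := μ)
    (F := fun s y => H (y, s) - H (y, 1)) (F' := fun s y => fderiv ℝ H (y, s) (0, 1))
    (ball_mem_nhds t ht2)
    (eventually_of_mem (ball_mem_nhds t ht2) fun s hs =>
      (integrable_sub_slice hH hhom one_ne_zero (ht2.trans (hball s hs)).ne').aestronglyMeasurable)
    (integrable_sub_slice hH hhom one_ne_zero ht.ne')
    (integrable_fderiv_slice hH hhom ht.ne' _).aestronglyMeasurable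
    (ae_of_all _ hbound)
    ((integrable_norm_mk_rpow_neg (r := finrank ℝ E + 1) (by linarith) ht2.ne').const_mul C
      |>.congr (ae_of_all _ fun y => by simp only [neg_add']))
    (ae_of_all _ fun y s hs =>
      ((hH.differentiableOn one_ne_zero).differentiableAt (isOpen_compl_singleton.mem_nhds
        (Prod.mk_ne_zero_of_snd_ne_zero y (ht2.trans (hball s hs)).ne'))).hasDerivAt_comp_mk
        |>.sub_const _)
  have hzero : (fun s => ∫ y, (H (y, s) - H (y, 1)) ∂μ) =ᶠ[𝓝 t] fun _ => 0 :=
    eventually_of_mem (ball_mem_nhds t ht2) fun s hs =>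
      integral_sub_slice_one_eq_zero hH hodd hhom (ht2.trans (hball s hs))
  exact hderiv.2.unique ((hasDerivAt_const t 0).congr_of_eventuallyEq hzero)

theorem integral_fderiv_apply_eq_zero_of_integrable {g : E → F} (hg : Differentiable ℝ g)
    (hgi : Integrable g μ) {u : E} (hg'i : Integrable (fun y => fderiv ℝ g y u) μ) :
    ∫ y, fderiv ℝ g y u ∂μ = 0 := by
  simpa using integral_smul_fderiv_eq_neg_fderiv_smul_of_integrable (f := fun _ => (1 : ℝ))
    (g := g) (v := u) (by simp) (by simpa using hg'i) (by simpa using hgi)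
    (fun _ _ => differentiableAt_const _) (fun y _ => hg y)

theorem integral_fderiv_slice_horizontal_eq (hH : ContDiffOn ℝ 1 H {0}ᶜ)
    (hhom : IsPosHomogeneous (-finrank ℝ E) H) {s s' : ℝ} (hs : s ≠ 0) (hs' : s' ≠ 0) (u : E) :
    ∫ y, fderiv ℝ H (y, s) (u, 0) ∂μ = ∫ y, fderiv ℝ H (y, s') (u, 0) ∂μ := by
  have hslice : ∀ σ ≠ 0, ∀ y : E, HasFDerivAt (fun y => H (y, σ))
      ((fderiv ℝ H (y, σ)).comp (ContinuousLinearMap.inl ℝ E ℝ)) y := fun σ hσ y =>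
    ((hH.differentiableOn one_ne_zero).differentiableAt (isOpen_compl_singleton.mem_nhds
      (Prod.mk_ne_zero_of_snd_ne_zero y hσ))).hasFDerivAt.comp y (hasFDerivAt_prodMk_left y σ)
  have hfderiv : ∀ y, fderiv ℝ (fun y => H (y, s) - H (y, s')) y u =
      fderiv ℝ H (y, s) (u, 0) - fderiv ℝ H (y, s') (u, 0) := fun y => by
    rw [((hslice s hs y).fun_sub (hslice s' hs' y)).fderiv]
    rfl
  have hint := (integrable_fderiv_slice (μ := μ) hH hhom hs (u, 0)).sub
    (integrable_fderiv_slice hH hhom hs' (u, 0))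
  have hzero := integral_fderiv_apply_eq_zero_of_integrable (g := fun y => H (y, s) - H (y, s'))
    (fun y => ((hslice s hs y).fun_sub (hslice s' hs' y)).differentiableAt)
    (integrable_sub_slice hH hhom hs' hs) (hint.congr (ae_of_all _ fun y => (hfderiv y).symm))
  rwa [integral_congr_ae (ae_of_all _ hfderiv), integral_sub (integrable_fderiv_slice hH hhom hs _)
    (integrable_fderiv_slice hH hhom hs' _), sub_eq_zero] at hzero

theorem integral_fderiv_slice_horizontal_eq_zero (hH : ContDiffOn ℝ 1 H {0}ᶜ)
    (hhom : IsPosHomogeneous (-finrank ℝ E) H) {s : ℝ} (hs : s ≠ 0) (u : E) :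
    ∫ y, fderiv ℝ H (y, s) (u, 0) ∂μ = 0 := by
  -- the integral does not depend on the height, yet rescaling the height by `2` halves it
  have h := integral_fderiv_slice_horizontal_eq (μ := μ) hH hhom (mul_ne_zero two_ne_zero hs) hs u
  rw [integral_fderiv_slice_mul hH hhom two_pos hs] at h
  have hhalf : (2⁻¹ - 1 : ℝ) • ∫ y, fderiv ℝ H (y, s) (u, 0) ∂μ = 0 := by
    linear_combination (norm := module) h
  exact (smul_eq_zero.1 hhalf).resolve_left (by norm_num)

theorem integral_fderiv_slice_eq_zero (hH : ContDiffOn ℝ 1 H {0}ᶜ) (hodd : ∀ x, H (-x) = -H x)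
    (hhom : IsPosHomogeneous (-finrank ℝ E) H) {t : ℝ} (ht : 0 < t) (w : E × ℝ) :
    ∫ y, fderiv ℝ H (y, t) w ∂μ = 0 := by
  have hw : ∀ y, fderiv ℝ H (y, t) w =
      fderiv ℝ H (y, t) (w.1, 0) + w.2 • fderiv ℝ H (y, t) (0, 1) := fun y => by
    rw [← map_smul, ← map_add, Prod.smul_mk, smul_zero, smul_eq_mul, mul_one, Prod.mk_add_mk,
      add_zero, zero_add]
  simp_rw [hw]
  rw [integral_add (integrable_fderiv_slice hH hhom ht.ne' _) ?_, integral_smul,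
    integral_fderiv_slice_horizontal_eq_zero hH hhom ht.ne',
    integral_fderiv_slice_vertical_eq_zero hH hodd hhom ht, smul_zero, add_zero]
  exact (integrable_fderiv_slice hH hhom ht.ne' _).smul _

theorem integral_fderiv_graph_eq_zero {G : E × ℝ → F} (hG : ContDiffOn ℝ 1 G {0}ᶜ)
    (hodd : ∀ x, G (-x) = -G x) (hhom : IsPosHomogeneous (-finrank ℝ E) G) (φ : E →L[ℝ] ℝ)
    {t : ℝ} (ht : 0 < t) (v : E × ℝ) :
    ∫ y, fderiv ℝ G (y, φ y + t) v ∂μ = 0 := by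
  -- the shear `A (y, s) = (y, s + φ y)` carries the slice `s = t` onto the graph
  set A := (ContinuousLinearEquiv.refl ℝ E).skewProd (ContinuousLinearEquiv.refl ℝ ℝ) φ
  have hpre : A ⁻¹' {0}ᶜ = {0}ᶜ := by
    ext x
    simp [A.map_eq_zero_iff]
  have hGA : ContDiffOn ℝ 1 (G ∘ A) {0}ᶜ :=
    hpre ▸ hG.comp_continuousLinearMap (A : E × ℝ →L[ℝ] E × ℝ)
  have hoddA : ∀ x, (G ∘ A) (-x) = -(G ∘ A) x := fun x => by
    simp only [Function.comp_apply, map_neg, hodd]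
  have hderiv : ∀ y, fderiv ℝ G (y, φ y + t) v = fderiv ℝ (G ∘ A) (y, t) (A.symm v) := fun y => by
    rw [A.comp_right_fderiv]
    simp [A, add_comm]
  simp_rw [hderiv]
  exact integral_fderiv_slice_eq_zero hGA hoddA (hhom.comp_continuousLinearEquiv A) ht _

end Slices

theorem integral_partial_homogeneous_eq_zero_general (n : ℕ)
    (G : EuclideanSpace ℝ (Fin n) × ℝ → ℝ)
    (hdiff : ∀ x : EuclideanSpace ℝ (Fin n) × ℝ, x ≠ 0 → DifferentiableAt ℝ G x)
    (hC1 : ContinuousOn (fderiv ℝ G) {x | x ≠ 0})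
    (hodd : ∀ x, G (-x) = -G x)
    (hhom : ∀ l : ℝ, 0 < l → ∀ x : EuclideanSpace ℝ (Fin n) × ℝ, x ≠ 0 →
        G (l • x) = l ^ (-(n : ℝ)) * G x)
    (v : EuclideanSpace ℝ (Fin n) × ℝ)
    (a : EuclideanSpace ℝ (Fin n)) (t : ℝ) (ht : 0 < t) :
    (∫ y : EuclideanSpace ℝ (Fin n), fderiv ℝ G (y, ⟪a, y⟫ + t) v) = 0 := by
  have hG : ContDiffOn ℝ 1 G {0}ᶜ :=
    (contDiffOn_succ_iff_fderiv_of_isOpen (n := 0) isOpen_compl_singleton).2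
      ⟨fun x hx => (hdiff x hx).differentiableWithinAt, by simp, contDiffOn_zero.2 hC1⟩
  have hhom' : IsPosHomogeneous (-finrank ℝ (EuclideanSpace ℝ (Fin n)) : ℝ) G := by
    rw [finrank_euclideanSpace_fin]
    exact hhom
  exact integral_fderiv_graph_eq_zero hG hodd hhom' (innerSL ℝ a) ht v

/-- If `G ∈ C¹(ℝ^{n+1} \ {0})` is odd and positively homogeneous of degree `-n`, and
`F = ∂_j G` is a first-order coordinate partial derivative of `G`, then for every
`a ∈ ℝⁿ` and `t > 0`: `∫_{ℝⁿ} F(y, a·y + t) dy = 0`. -/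
theorem integral_partial_homogeneous_eq_zero (n : ℕ)
    (G : EuclideanSpace ℝ (Fin n) × ℝ → ℝ)
    (hdiff : ∀ x : EuclideanSpace ℝ (Fin n) × ℝ, x ≠ 0 → DifferentiableAt ℝ G x)
    (hC1 : ContinuousOn (fderiv ℝ G) {x | x ≠ 0})
    (hodd : ∀ x, G (-x) = -G x)
    (hhom : ∀ l : ℝ, 0 < l → ∀ x : EuclideanSpace ℝ (Fin n) × ℝ, x ≠ 0 →
        G (l • x) = l ^ (-(n : ℝ)) * G x)
    (j : Fin (n + 1)) (v : EuclideanSpace ℝ (Fin n) × ℝ)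
    (hv : v = if h : (j : ℕ) < n then (EuclideanSpace.single (⟨(j : ℕ), h⟩ : Fin n) (1 : ℝ), (0 : ℝ))
        else (0, 1))
    (a : EuclideanSpace ℝ (Fin n)) (t : ℝ) (ht : 0 < t) :
    (∫ y : EuclideanSpace ℝ (Fin n), fderiv ℝ G (y, ⟪a, y⟫ + t) v) = 0 :=
  integral_partial_homogeneous_eq_zero_general n G hdiff hC1 hodd hhom v a t ht
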